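/- Let p > 3 be a prime, n, k integers coprime to p, and χ, ψ Dirichlet characters mod p with χ non-principal and ψ non-principal with ψ² non-principal. Then ∑_{m=1}^{p-1} ψ(m)·|∑_{a=1}^{p-1} χ(m·a + n·ā)·e(k·a/p)|² = (ψ(n·k²)·τ(ψ)·τ(ψ̄)·τ(ψ̄²)/p)·∑_{u=1}^{p-1} χ̄(u)·∑_{a=1}^{p-1} ψ̄(u·a-1)·ψ(u·ā-1)·ψ²(a-1). -/

import Mathlib

/-!
Expanding the square and substituting `a = c b`, `m ↦ n m / (c b²)` turns the sum over `m` into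
`W(c) = ∑ₘ ψ(m) χ(mc + 1) χ̄(m + c)`, and the remaining sum over `b` into the twisted Gauss sum
`∑_b ψ̄²(b) e(k(c - 1)b) = ψ²(k(c - 1)) τ(ψ̄²)`.
The Möbius substitution `u = (m + c)/(mc + 1)` rewrites `W(c)` as
`ψ(-1) ∑ᵤ χ̄(u) ψ̄(uc - 1) ψ(u - c)`; for `c = ±1` the substitution degenerates, and both sides
are evaluated directly from the orthogonality of `χ` and `ψ`. Finally `τ(ψ) τ(ψ̄) = ψ(-1) p`
absorbs the sign `ψ(-1)`.
-/

open Finset Complex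

/-- `e p x = e^{2πi x/p}` for `x : ZMod p`. -/
noncomputable def e (p : ℕ) [NeZero p] (x : ZMod p) : ℂ :=
  Complex.exp (2 * Real.pi * Complex.I * x.val / p)

/-- Gauss sum `τ(f) = ∑_{a mod p} f(a) e^{2πia/p}` associated to `f : ZMod p → ℂ`. -/
noncomputable def gaussSum' (p : ℕ) [NeZero p] (f : ZMod p → ℂ) : ℂ :=
  ∑ a : ZMod p, f a * e p a

/-- The Legendre symbol character mod `p`, with complex values. -/
noncomputable def legChar (p : ℕ) [Fact p.Prime] : DirichletCharacter ℂ p :=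
  (quadraticChar (ZMod p)).ringHomComp (Int.castRingHom ℂ)

open scoped ComplexConjugate

namespace MulChar

variable {F R : Type*} [Field F] [CommRing R]

lemma inv_apply_div (χ : MulChar F R) (x y : F) : χ⁻¹ (x / y) = χ y * χ⁻¹ x := by
  rw [inv_apply', inv_div, div_eq_mul_inv, map_mul, ← inv_apply']

lemma apply_mul_inv_apply (χ : MulChar F R) {x : F} (hx : x ≠ 0) : χ x * χ⁻¹ x = 1 := by
  rw [inv_apply', ← map_mul, mul_inv_cancel₀ hx, map_one]

lemma sum_mul_apply_add_mul_inv_apply [Fintype F] [IsDomain R] {ν : MulChar F R} (hν : ν ≠ 1)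
    (χ : MulChar F R) (c : F) : ∑ x, ν x * (χ (x + c) * χ⁻¹ (x + c)) = -ν (-c) := by
  classical
  have h (x : F) : ν x * (χ (x + c) * χ⁻¹ (x + c)) = ν x - if x = -c then ν x else 0 := by
    split_ifs with hx
    · simp [hx]
    · rw [apply_mul_inv_apply χ fun h ↦ hx (eq_neg_of_add_eq_zero_left h)]
      ring
  simp only [h, sum_sub_distrib, sum_ite_eq', mem_univ, if_true, sum_eq_zero_of_ne_one hν,
    zero_sub]

end MulChar

section Mobius

variable {F R : Type*} [Field F] [Fintype F] [CommRing R]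

lemma sum_filter_ne_zero_eq_sum [DecidableEq F] {f : F → R} (hf : f 0 = 0) :
    ∑ x ∈ univ.filter (fun x : F => x ≠ 0), f x = ∑ x, f x :=
  sum_filter_of_ne fun x _ hx ↦ by rintro rfl; exact hx hf

/-- The Möbius maps `x ↦ (x + c) / (x c + 1)` and `y ↦ (c - y) / (y c - 1)` are mutually inverse
away from their poles; at a pole the division gives `0`, so the term vanishes by `hf` or `hg`. -/
lemma sum_mul_comp_mobius {f g : F → R} (hf : f 0 = 0) (hg : g 0 = 0) {c : F} (hc : c * c ≠ 1) :
    ∑ x, f x * g ((x + c) / (x * c + 1)) = ∑ y, f ((c - y) / (y * c - 1)) * g y := by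
  classical
  have hc' : c * c - 1 ≠ 0 := sub_ne_zero.mpr hc
  have pole {x : F} (hx : x * c + 1 ≠ 0) :
      (x + c) / (x * c + 1) * c - 1 = (c * c - 1) / (x * c + 1) := by
    rw [div_mul_eq_mul_div, div_sub_one hx]; ring
  have pole' {y : F} (hy : y * c - 1 ≠ 0) :
      (c - y) / (y * c - 1) * c + 1 = (c * c - 1) / (y * c - 1) := by
    rw [div_mul_eq_mul_div, div_add_one hy]; ring
  have left_inv {x : F} (hx : x * c + 1 ≠ 0) :
      (c - (x + c) / (x * c + 1)) / ((x + c) / (x * c + 1) * c - 1) = x := by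
    rw [pole hx, div_eq_iff (div_ne_zero hc' hx), mul_div_assoc', eq_div_iff hx, sub_mul,
      div_mul_cancel₀ _ hx]
    ring
  have right_inv {y : F} (hy : y * c - 1 ≠ 0) :
      ((c - y) / (y * c - 1) + c) / ((c - y) / (y * c - 1) * c + 1) = y := by
    rw [pole' hy, div_eq_iff (div_ne_zero hc' hy), mul_div_assoc', eq_div_iff hy, add_mul,
      div_mul_cancel₀ _ hy]
    ring
  have hL := sum_filter_of_ne (s := univ) (p := fun x ↦ x * c + 1 ≠ 0)
    (f := fun x ↦ f x * g ((x + c) / (x * c + 1))) fun x _ hx h ↦ hx (by simp [h, hg])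
  have hR := sum_filter_of_ne (s := univ) (p := fun y ↦ y * c - 1 ≠ 0)
    (f := fun y ↦ f ((c - y) / (y * c - 1)) * g y)
    fun y _ hy h ↦ hy (by rw [h, div_zero, hf, zero_mul])
  rw [← hL, ← hR]
  refine sum_nbij' (fun x ↦ (x + c) / (x * c + 1)) (fun y ↦ (c - y) / (y * c - 1)) ?_ ?_
    (fun x hx ↦ left_inv (mem_filter.mp hx).2) (fun y hy ↦ right_inv (mem_filter.mp hy).2) ?_
  all_goals simp only [mem_filter, mem_univ, true_and]
  · intro x hx
    rw [pole hx]
    exact div_ne_zero hc' hx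
  · intro y hy
    rw [pole' hy]
    exact div_ne_zero hc' hy
  · intro x hx
    rw [left_inv hx]

noncomputable def mobiusSum (χ ψ : MulChar F R) (c : F) : R :=
  ∑ m, ψ m * (χ (m * c + 1) * χ⁻¹ (m + c))

lemma mobiusSum_eq [IsDomain R] {χ ψ : MulChar F R} (hχ : χ ≠ 1) (hψ : ψ ≠ 1) (c : F) :
    mobiusSum χ ψ c = ψ (-1) * ∑ u, χ⁻¹ u * (ψ⁻¹ (u * c - 1) * ψ (u - c)) := by
  have hχ' : χ⁻¹ ≠ 1 := inv_ne_one.mpr hχ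
  by_cases hc : c * c = 1
  · rcases mul_self_eq_one_iff.mp hc with rfl | rfl
    · have := MulChar.sum_mul_apply_add_mul_inv_apply hχ' ψ⁻¹ (-1)
      simp only [inv_inv, ← sub_eq_add_neg] at this
      simp only [mobiusSum, mul_one, MulChar.sum_mul_apply_add_mul_inv_apply hψ]
      rw [this, neg_neg, map_one]
      ring
    · have hψ₁ : ψ (-1) * ψ (-1) = 1 := by rw [← map_mul, neg_one_mul, neg_neg, map_one]
      have hL (m : F) : ψ m * (χ (m * -1 + 1) * χ⁻¹ (m + -1)) =
          χ (-1) * (ψ m * (χ (m + -1) * χ⁻¹ (m + -1))) := by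
        rw [show m * -1 + 1 = -1 * (m + -1) by ring, map_mul]
        ring
      have hR (u : F) : χ⁻¹ u * (ψ⁻¹ (u * -1 - 1) * ψ (u - -1)) =
          ψ (-1) * (χ⁻¹ u * (ψ⁻¹ (u + 1) * ψ⁻¹⁻¹ (u + 1))) := by
        rw [inv_inv, show u * -1 - 1 = -1 * (u + 1) by ring, sub_neg_eq_add, map_mul,
          MulChar.inv_apply' ψ (-1), inv_neg_one]
        ring
      simp only [mobiusSum, hL, hR, ← mul_sum, MulChar.sum_mul_apply_add_mul_inv_apply hψ,
        MulChar.sum_mul_apply_add_mul_inv_apply hχ', neg_neg, map_one, MulChar.inv_apply' χ (-1),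
        inv_neg_one]
      linear_combination χ (-1) * hψ₁
  · have hT (m : F) : χ (m * c + 1) * χ⁻¹ (m + c) = χ⁻¹ ((m + c) / (m * c + 1)) :=
      (MulChar.inv_apply_div χ _ _).symm
    have hS (u : F) : ψ ((c - u) / (u * c - 1)) = ψ (-1) * (ψ⁻¹ (u * c - 1) * ψ (u - c)) := by
      rw [← inv_inv ψ, MulChar.inv_apply_div, inv_inv, show c - u = -1 * (u - c) by ring, map_mul]
      ring
    simp only [mobiusSum, hT, sum_mul_comp_mobius (MulChar.map_zero ψ) (MulChar.map_zero χ⁻¹) hc,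
      hS, mul_sum]
    exact sum_congr rfl fun u _ ↦ by ring

lemma sum_mul_apply_mul_inv_apply_eq_mobiusSum (χ ψ : MulChar F R) {N : F} (hN : N ≠ 0)
    (b c : F) :
    ∑ m, ψ m * (χ (m * (c * b) + N * (c * b)⁻¹) * χ⁻¹ (m * b + N * b⁻¹)) =
      ψ N * ψ⁻¹ c * ψ⁻¹ b ^ 2 * mobiusSum χ ψ c := by
  rcases eq_or_ne b 0 with rfl | hb
  · simp [MulChar.map_zero]
  rcases eq_or_ne c 0 with rfl | hc
  · simp [MulChar.map_zero]
  have he : N * (c * b)⁻¹ ≠ 0 := by positivity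
  have hd : N * c⁻¹ * b⁻¹ ^ 2 ≠ 0 := by positivity
  rw [mobiusSum, mul_sum]
  refine (Fintype.sum_bijective _ (mulLeft_bijective₀ _ hd) _ _ fun m ↦ ?_).symm
  have h₁ : N * c⁻¹ * b⁻¹ ^ 2 * m * (c * b) + N * (c * b)⁻¹ = N * (c * b)⁻¹ * (m * c + 1) := by
    field_simp
  have h₂ : N * c⁻¹ * b⁻¹ ^ 2 * m * b + N * b⁻¹ = N * (c * b)⁻¹ * (m + c) := by
    field_simp
  have hψd : ψ (N * c⁻¹ * b⁻¹ ^ 2) = ψ N * ψ⁻¹ c * ψ⁻¹ b ^ 2 := by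
    rw [map_mul, map_mul, map_pow, ← MulChar.inv_apply', ← MulChar.inv_apply']
  rw [h₁, h₂, map_mul ψ, hψd, map_mul χ, map_mul χ⁻¹]
  linear_combination -ψ N * ψ⁻¹ c * ψ⁻¹ b ^ 2 * ψ m * χ (m * c + 1) * χ⁻¹ (m + c) *
    MulChar.apply_mul_inv_apply χ he

lemma sum_mul_mobiusSum_eq [DecidableEq F] [IsDomain R] {χ ψ : MulChar F R} (hχ : χ ≠ 1)
    (hψ : ψ ≠ 1) :
    ∑ c, ψ⁻¹ c * ψ (c - 1) ^ 2 * mobiusSum χ ψ c =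
      ψ (-1) * ∑ u, χ⁻¹ u * ∑ a ∈ univ.filter (fun a : F => a ≠ 0),
        ψ⁻¹ (u * a - 1) * ψ (u * a⁻¹ - 1) * ψ (a - 1) ^ 2 := by
  rw [← sum_filter_ne_zero_eq_sum (by simp [MulChar.map_zero])]
  simp only [mul_sum]
  rw [sum_comm]
  refine sum_congr rfl fun c hc ↦ ?_
  rw [mobiusSum_eq hχ hψ, mul_sum, mul_sum]
  refine sum_congr rfl fun u _ ↦ ?_
  have hc : c ≠ 0 := (mem_filter.mp hc).2
  rw [show u * c⁻¹ - 1 = c⁻¹ * (u - c) by field_simp, map_mul, ← MulChar.inv_apply']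
  ring

end Mobius

section GaussSum

variable {F R : Type*} [Field F] [Fintype F] [CommRing R] [IsDomain R]

lemma gaussSum_mulShift_eq_of_ne_one {ν : MulChar F R} (hν : ν ≠ 1) (τ : AddChar F R) (l : F) :
    gaussSum ν (τ.mulShift l) = ν⁻¹ l * gaussSum ν τ := by
  rcases eq_or_ne l 0 with rfl | hl
  · rw [AddChar.mulShift_zero, gaussSum_one_right hν, MulChar.map_zero, zero_mul]
  · simpa using gaussSum_mulShift_eq ν τ (Units.mk0 l hl)

lemma gaussSum_mul_gaussSum_inv {ψ : MulChar F R} (hψ : ψ ≠ 1) {τ : AddChar F R}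
    (hτ : τ.IsPrimitive) : gaussSum ψ τ * gaussSum ψ⁻¹ τ = ψ (-1) * Fintype.card F := by
  rw [← mul_gaussSum_inv_eq_gaussSum ψ⁻¹, mul_left_comm, gaussSum_mul_gaussSum_eq_card hψ hτ,
    MulChar.inv_apply', inv_neg_one]

end GaussSum

section NormSq

variable {F : Type*} [Field F] [Fintype F]

lemma norm_sq_sum_eq_sum_sum_mul_conj {f : F → ℂ} (hf : f 0 = 0) :
    (‖∑ a, f a‖ : ℂ) ^ 2 = ∑ b, ∑ c, f (c * b) * conj (f b) := by
  rw [← mul_conj', map_sum, sum_mul_sum, sum_comm]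
  refine sum_congr rfl fun b _ ↦ ?_
  rcases eq_or_ne b 0 with rfl | hb
  · simp [hf]
  · exact (Fintype.sum_bijective _ (mulRight_bijective₀ b hb) _ _ fun _ ↦ rfl).symm

theorem sum_mul_norm_sq_sum_eq (τ : AddChar F ℂ) (χ : MulChar F ℂ) {ψ : MulChar F ℂ}
    (hψ2 : ψ ^ 2 ≠ 1) {N : F} (hN : N ≠ 0) (K : F) :
    ∑ m, ψ m * (‖∑ a, χ (m * a + N * a⁻¹) * τ (K * a)‖ : ℂ) ^ 2 =
      ψ N * ψ K ^ 2 * gaussSum (ψ⁻¹ ^ 2) τ * ∑ c, ψ⁻¹ c * ψ (c - 1) ^ 2 * mobiusSum χ ψ c := by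
  have hψ2' : ψ⁻¹ ^ 2 ≠ 1 := by rwa [inv_pow, ne_eq, inv_eq_one]
  have expand (m : F) : ψ m * (‖∑ a, χ (m * a + N * a⁻¹) * τ (K * a)‖ : ℂ) ^ 2 =
      ∑ b, ∑ c, ψ m * (χ (m * (c * b) + N * (c * b)⁻¹) * χ⁻¹ (m * b + N * b⁻¹)) *
        τ (K * (c - 1) * b) := by
    rw [norm_sq_sum_eq_sum_sum_mul_conj (by simp [MulChar.map_zero]), mul_sum]
    refine sum_congr rfl fun b _ ↦ ?_
    rw [mul_sum]
    refine sum_congr rfl fun c _ ↦ ?_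
    rw [map_mul (starRingEnd ℂ), ← AddChar.map_neg_eq_conj, starRingEnd_apply,
      MulChar.star_apply', show K * (c - 1) * b = K * (c * b) + -(K * b) by ring,
      AddChar.map_add_eq_mul]
    ring
  have gauss (c : F) :
      ∑ b, (ψ⁻¹ ^ 2) b * τ (K * (c - 1) * b) = ψ K ^ 2 * ψ (c - 1) ^ 2 * gaussSum (ψ⁻¹ ^ 2) τ := by
    have := gaussSum_mulShift_eq_of_ne_one hψ2' τ (K * (c - 1))
    rw [← inv_pow, inv_inv, MulChar.pow_apply' _ two_ne_zero, map_mul, mul_pow] at this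
    exact this
  calc _ = ∑ b, ∑ c, (∑ m, ψ m * (χ (m * (c * b) + N * (c * b)⁻¹) * χ⁻¹ (m * b + N * b⁻¹))) *
          τ (K * (c - 1) * b) := by
        simp only [expand, sum_mul]
        rw [sum_comm]
        exact sum_congr rfl fun b _ ↦ sum_comm
    _ = ∑ c, ψ N * ψ⁻¹ c * mobiusSum χ ψ c * ∑ b, (ψ⁻¹ ^ 2) b * τ (K * (c - 1) * b) := by
        simp only [sum_mul_apply_mul_inv_apply_eq_mobiusSum χ ψ hN, mul_sum,
          MulChar.pow_apply' _ two_ne_zero]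
        rw [sum_comm]
        exact sum_congr rfl fun c _ ↦ sum_congr rfl fun b _ ↦ by ring
    _ = _ := by
        simp only [gauss, mul_sum]
        exact sum_congr rfl fun c _ ↦ by ring

end NormSq

lemma e_eq_stdAddChar (p : ℕ) [NeZero p] : e p = ZMod.stdAddChar :=
  funext fun x ↦ by rw [e, ZMod.stdAddChar_apply, ZMod.toCircle_apply]

lemma gaussSum'_eq_gaussSum (p : ℕ) [NeZero p] (ν : MulChar (ZMod p) ℂ) :
    gaussSum' p ν = gaussSum ν ZMod.stdAddChar := by
  rw [gaussSum', gaussSum, e_eq_stdAddChar]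

theorem stmt_13_general (p : ℕ) [Fact p.Prime] (n k : ℤ)
    (hn : IsCoprime n (p : ℤ))
    (χ ψ : DirichletCharacter ℂ p) (hχ : χ ≠ 1) (hψ : ψ ≠ 1) (hψ2 : ψ ^ 2 ≠ 1) :
    ∑ m ∈ univ.filter (fun m : ZMod p => m ≠ 0),
      ψ m * ‖∑ a ∈ univ.filter (fun a : ZMod p => a ≠ 0),
        χ ((m : ZMod p) * a + (n : ZMod p) * a⁻¹) * e p ((k : ZMod p) * a)‖ ^ 2
      = ψ ((n * k ^ 2 : ℤ) : ZMod p) * gaussSum' p ψ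
          * gaussSum' p (fun a => (starRingEnd ℂ) (ψ a))
          * gaussSum' p (fun a => (starRingEnd ℂ) (ψ a) ^ 2) / p
          * ∑ u ∈ univ.filter (fun u : ZMod p => u ≠ 0),
              (starRingEnd ℂ) (χ u) *
                ∑ a ∈ univ.filter (fun a : ZMod p => a ≠ 0),
                  (starRingEnd ℂ) (ψ (u * a - 1)) * ψ (u * a⁻¹ - 1) * ψ (a - 1) ^ 2 := by
  have hN : (n : ZMod p) ≠ 0 := by
    have h := hn.map (Int.castRingHom (ZMod p))
    rw [map_natCast, ZMod.natCast_self, isCoprime_zero_right] at h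
    exact h.ne_zero
  have hconj2 : (fun a ↦ conj (ψ a) ^ 2) = ⇑(ψ⁻¹ ^ 2) := by
    ext a
    rw [MulChar.pow_apply' _ two_ne_zero, ← ψ.star_apply']
    rfl
  have hinner (m : ZMod p) : ∑ a ∈ univ.filter (fun a : ZMod p => a ≠ 0),
      χ (m * a + (n : ZMod p) * a⁻¹) * e p ((k : ZMod p) * a) =
        ∑ a, χ (m * a + n * a⁻¹) * ZMod.stdAddChar ((k : ZMod p) * a) := by
    rw [sum_filter_ne_zero_eq_sum (by simp [MulChar.map_zero]), e_eq_stdAddChar]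
  have hG := gaussSum_mul_gaussSum_inv hψ (ZMod.isPrimitive_stdAddChar p)
  have hp : (p : ℂ) ≠ 0 := Nat.cast_ne_zero.mpr (Fact.out : p.Prime).ne_zero
  rw [hconj2]
  simp only [hinner, gaussSum'_eq_gaussSum, starRingEnd_apply, MulChar.star_apply']
  rw [sum_filter_ne_zero_eq_sum (by simp [MulChar.map_zero]),
    sum_filter_ne_zero_eq_sum (by simp [MulChar.map_zero]),
    sum_mul_norm_sq_sum_eq _ _ hψ2 hN, sum_mul_mobiusSum_eq hχ hψ]
  push_cast
  rw [map_mul, map_pow, mul_assoc (_ * _ ^ 2) (gaussSum ψ _), hG, ZMod.card]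
  field_simp

theorem stmt_13 (p : ℕ) [Fact p.Prime] (hp : 3 < p) (n k : ℤ)
    (hn : IsCoprime n (p : ℤ)) (hk : IsCoprime k (p : ℤ))
    (χ ψ : DirichletCharacter ℂ p) (hχ : χ ≠ 1) (hψ : ψ ≠ 1) (hψ2 : ψ ^ 2 ≠ 1) :
    ∑ m ∈ univ.filter (fun m : ZMod p => m ≠ 0),
      ψ m * ‖∑ a ∈ univ.filter (fun a : ZMod p => a ≠ 0),
        χ ((m : ZMod p) * a + (n : ZMod p) * a⁻¹) * e p ((k : ZMod p) * a)‖ ^ 2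
      = ψ ((n * k ^ 2 : ℤ) : ZMod p) * gaussSum' p ψ
          * gaussSum' p (fun a => (starRingEnd ℂ) (ψ a))
          * gaussSum' p (fun a => (starRingEnd ℂ) (ψ a) ^ 2) / p
          * ∑ u ∈ univ.filter (fun u : ZMod p => u ≠ 0),
              (starRingEnd ℂ) (χ u) *
                ∑ a ∈ univ.filter (fun a : ZMod p => a ≠ 0),
                  (starRingEnd ℂ) (ψ (u * a - 1)) * ψ (u * a⁻¹ - 1) * ψ (a - 1) ^ 2 :=
  stmt_13_general p n k hn χ ψ hχ hψ hψ2
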